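/- Let G be a graph with a designated undeletable edge uv, and let G' be obtained by adding, for i = 1,...,N+2, vertices a_i, b_i with edges u a_i, u b_i, v b_i, a_i b_i (gadgets pairwise disjoint and mutually non-adjacent). If F is a set of at most N edges of G' such that G' - F contains no induced house, then uv ∉ F. -/

import Mathlib

/-!
Every edge of `G'` meets at most one gadget, so the at most `N` edges of `F` leave two gadgets
`i ≠ j` untouched. If `uv ∈ F`, then `u bᵢ v bⱼ` is a chordless 4-cycle of `G' - F`, and `aᵢ`,
adjacent to `u` and `bᵢ` only, completes it to an induced house.
-/

def house : SimpleGraph (Fin 5) :=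
  SimpleGraph.fromEdgeSet {s(0,1), s(1,2), s(2,3), s(3,0), s(0,4), s(1,4)}

/-- Gadget `i` has the vertices `aᵢ = (i, false)` and `bᵢ = (i, true)`. -/
def addHouseGadgets {V : Type*} (G : SimpleGraph V) (u v : V) (M : ℕ) :
    SimpleGraph (V ⊕ (Fin M × Bool)) :=
  SimpleGraph.fromRel (fun x y =>
    match x, y with
    | Sum.inl a, Sum.inl b => G.Adj a b
    | Sum.inl a, Sum.inr (_, false) => a = u
    | Sum.inl a, Sum.inr (_, true) => a = u ∨ a = v
    | Sum.inr (i, false), Sum.inr (j, true) => i = j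
    | _, _ => False)

lemma SimpleGraph.nonempty_house_embedding_of_adj {W : Type*} {H : SimpleGraph W}
    {x₀ x₁ x₂ x₃ x₄ : W}
    (h₀₁ : H.Adj x₀ x₁) (h₁₂ : H.Adj x₁ x₂) (h₂₃ : H.Adj x₂ x₃) (h₀₃ : H.Adj x₀ x₃)
    (h₀₄ : H.Adj x₀ x₄) (h₁₄ : H.Adj x₁ x₄)
    (n₀₂ : ¬H.Adj x₀ x₂) (n₁₃ : ¬H.Adj x₁ x₃) (n₂₄ : ¬H.Adj x₂ x₄) (n₃₄ : ¬H.Adj x₃ x₄) :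
    Nonempty (house ↪g H) := by
  -- injectivity is free: each non-adjacent pair of the house is separated by a third vertex
  have d₀₂ : x₀ ≠ x₂ := by rintro rfl; exact n₂₄ h₀₄
  have d₁₃ : x₁ ≠ x₃ := by rintro rfl; exact n₃₄ h₁₄
  have d₂₄ : x₂ ≠ x₄ := by rintro rfl; exact n₃₄ h₂₃.symm
  have d₃₄ : x₃ ≠ x₄ := by rintro rfl; exact n₁₃ h₁₄
  refine ⟨⟨⟨![x₀, x₁, x₂, x₃, x₄], ?_⟩, ?_⟩⟩
  · intro a b
    fin_cases a <;> fin_cases b <;> simp [*, h₀₁.ne, h₁₂.ne, h₂₃.ne, h₀₃.ne, h₀₄.ne, h₁₄.ne,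
      h₀₁.ne', h₁₂.ne', h₂₃.ne', h₀₃.ne', h₀₄.ne', h₁₄.ne', d₀₂.symm, d₁₃.symm, d₂₄.symm,
      d₃₄.symm]
  · intro a b
    change H.Adj (![x₀, x₁, x₂, x₃, x₄] a) (![x₀, x₁, x₂, x₃, x₄] b) ↔ house.Adj a b
    fin_cases a <;> fin_cases b <;> simp [house, H.adj_comm, *]

namespace addHouseGadgets

variable {V : Type*} {G : SimpleGraph V} {u v : V} {M : ℕ}

def touchedGadgets (F : Set (Sym2 (V ⊕ (Fin M × Bool)))) : Set (Fin M) :=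
  {i | ∃ e ∈ F, ∃ b, Sum.inr (i, b) ∈ e}

lemma eq_of_adj_inr_inr {i j : Fin M} {b c : Bool}
    (h : (addHouseGadgets G u v M).Adj (.inr (i, b)) (.inr (j, c))) : i = j := by
  cases b <;> cases c <;> simp [addHouseGadgets] at h <;> tauto

lemma eq_of_inr_mem_edgeSet {e : Sym2 (V ⊕ (Fin M × Bool))}
    (he : e ∈ (addHouseGadgets G u v M).edgeSet) {i j : Fin M} {b c : Bool}
    (hi : Sum.inr (i, b) ∈ e) (hj : Sum.inr (j, c) ∈ e) : i = j := by
  induction e using Sym2.ind with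
  | _ x y =>
    rcases Sym2.mem_iff.mp hi with rfl | rfl <;> rcases Sym2.mem_iff.mp hj with h | h
    · simp_all
    · exact eq_of_adj_inr_inr (h ▸ he)
    · exact (eq_of_adj_inr_inr (h ▸ he)).symm
    · simp_all

lemma ncard_touchedGadgets_le {F : Set (Sym2 (V ⊕ (Fin M × Bool)))}
    (hF : F ⊆ (addHouseGadgets G u v M).edgeSet) (hFfin : F.Finite) :
    (touchedGadgets F).ncard ≤ F.ncard := by
  classical
  rw [Set.ncard_eq_toFinset_card', Set.ncard_eq_toFinset_card F hFfin]
  exact Finset.card_le_card_of_forall_subsingleton (s := (touchedGadgets F).toFinset)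
    (t := hFfin.toFinset) (fun i e => ∃ b, Sum.inr (i, b) ∈ e)
    (fun i hi => by
      obtain ⟨e, he, b, hb⟩ := Set.mem_toFinset.mp hi
      exact ⟨e, hFfin.mem_toFinset.mpr he, b, hb⟩)
    (fun e he i ⟨_, b, hb⟩ j ⟨_, c, hc⟩ =>
      eq_of_inr_mem_edgeSet (hF (hFfin.mem_toFinset.mp he)) hb hc)

lemma exists_ne_notMem_touchedGadgets {F : Set (Sym2 (V ⊕ (Fin M × Bool)))}
    (hF : F ⊆ (addHouseGadgets G u v M).edgeSet) (hFfin : F.Finite) (hM : F.ncard + 2 ≤ M) :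
    ∃ i j, i ≠ j ∧ i ∉ touchedGadgets F ∧ j ∉ touchedGadgets F := by
  have hsum := Set.ncard_add_ncard_compl (touchedGadgets F)
  rw [Nat.card_eq_fintype_card, Fintype.card_fin] at hsum
  have htouched := ncard_touchedGadgets_le hF hFfin
  obtain ⟨i, j, hi, hj, hij⟩ :=
    (Set.one_lt_ncard_iff).mp (by omega : 1 < (touchedGadgets F)ᶜ.ncard)
  exact ⟨i, j, hij, hi, hj⟩

lemma mk_inr_notMem {F : Set (Sym2 (V ⊕ (Fin M × Bool)))} {i : Fin M}
    (hi : i ∉ touchedGadgets F) (x : V ⊕ (Fin M × Bool)) (b : Bool) : s(x, .inr (i, b)) ∉ F :=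
  fun h => hi ⟨_, h, b, Sym2.mem_mk_right _ _⟩

lemma nonempty_house_embedding {F : Set (Sym2 (V ⊕ (Fin M × Bool)))} (huv : u ≠ v)
    (huvF : s(.inl u, .inl v) ∈ F) {i j : Fin M} (hij : i ≠ j)
    (hi : i ∉ touchedGadgets F) (hj : j ∉ touchedGadgets F) :
    Nonempty (house ↪g (addHouseGadgets G u v M).deleteEdges F) := by
  have adj {x y} (h : (addHouseGadgets G u v M).Adj x y) (hF : s(x, y) ∉ F) :
      ((addHouseGadgets G u v M).deleteEdges F).Adj x y :=
    (SimpleGraph.deleteEdges_adj ..).mpr ⟨h, hF⟩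
  have nonadj {x y} (h : ¬(addHouseGadgets G u v M).Adj x y) :
      ¬((addHouseGadgets G u v M).deleteEdges F).Adj x y :=
    fun h' => h (SimpleGraph.deleteEdges_le F h')
  exact SimpleGraph.nonempty_house_embedding_of_adj (x₀ := .inl u) (x₁ := .inr (i, true))
    (x₂ := .inl v) (x₃ := .inr (j, true)) (x₄ := .inr (i, false))
    (adj (by simp [addHouseGadgets]) (mk_inr_notMem hi _ _))
    (adj (by simp [addHouseGadgets]) (Sym2.eq_swap ▸ mk_inr_notMem hi _ _))
    (adj (by simp [addHouseGadgets]) (mk_inr_notMem hj _ _))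
    (adj (by simp [addHouseGadgets]) (mk_inr_notMem hj _ _))
    (adj (by simp [addHouseGadgets]) (mk_inr_notMem hi _ _))
    (adj (by simp [addHouseGadgets]) (mk_inr_notMem hi _ _))
    (fun h => ((SimpleGraph.deleteEdges_adj ..).mp h).2 huvF)
    (nonadj (by simp [addHouseGadgets, hij])) (nonadj (by simp [addHouseGadgets, huv.symm]))
    (nonadj (by simp [addHouseGadgets, hij]))

end addHouseGadgets

theorem undeletable_edge_not_deleted_general {V : Type*} (G : SimpleGraph V) (u v : V) (N : ℕ)
    (F : Set (Sym2 (V ⊕ (Fin (N + 2) × Bool))))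
    (hFsub : F ⊆ (addHouseGadgets G u v (N + 2)).edgeSet)
    (hFfin : F.Finite) (hFcard : F.ncard ≤ N)
    (hfree : IsEmpty (house ↪g (addHouseGadgets G u v (N + 2)).deleteEdges F)) :
    s(Sum.inl u, Sum.inl v) ∉ F := by
  intro huvF
  have huv : u ≠ v := fun h => ((SimpleGraph.mem_edgeSet _).mp (hFsub huvF)).ne (congrArg _ h)
  obtain ⟨i, j, hij, hi, hj⟩ :=
    addHouseGadgets.exists_ne_notMem_touchedGadgets hFsub hFfin (by omega)
  exact hfree.false (addHouseGadgets.nonempty_house_embedding huv huvF hij hi hj).some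

/-- Let `uv` be a designated undeletable edge of `G` and let `G'` be obtained by
attaching `N + 2` gadgets as above. If `F` is a set of at most `N` edges of `G'`
such that `G' - F` contains no induced house, then `uv ∉ F`. -/
theorem undeletable_edge_not_deleted {V : Type*} (G : SimpleGraph V) (u v : V)
    (huv : G.Adj u v) (N : ℕ)
    (F : Set (Sym2 (V ⊕ (Fin (N + 2) × Bool))))
    (hFsub : F ⊆ (addHouseGadgets G u v (N + 2)).edgeSet)
    (hFfin : F.Finite) (hFcard : F.ncard ≤ N)
    (hfree : IsEmpty (house ↪g (addHouseGadgets G u v (N + 2)).deleteEdges F)) :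
    s(Sum.inl u, Sum.inl v) ∉ F :=
  undeletable_edge_not_deleted_general G u v N F hFsub hFfin hFcard hfree
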